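/- arXiv:1006.2345 — 7 statements merged into one kernel-verified Lean document; each statement's English description precedes it below -/
import Mathlib

section
/- If f : ℝ → ℝ is a polynomial of degree m ≥ 2 with leading coefficient a_m ≠ 0, then the function s ↦ s²·f'(s)·(1 - f'(s)²) + s·(s² - h²)·f''(s) - 2h²·f'(s) is a polynomial in s of degree 3m - 1 with leading coefficient -m³·a_m³; in particular it is not identically zero. -/
open Polynomial


/-- If `f` is a polynomial of degree `m ≥ 2` with leading coefficient `aₘ ≠ 0`, then
`s²f'(1-f'²) + s(s²-h²)f'' - 2h²f'` is a polynomial of degree `3m-1` with leading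
coefficient `-m³aₘ³`; in particular it is not identically zero. -/
theorem stmt_0 (h : ℝ) (hh : h ≠ 0) (m : ℕ) (hm : 2 ≤ m) (f : ℝ[X])
    (hdeg : f.natDegree = m) (ha : f.coeff m ≠ 0) :
    let P : ℝ[X] :=
      X ^ 2 * derivative f * (1 - derivative f ^ 2)
        + X * (X ^ 2 - C (h ^ 2)) * derivative (derivative f)
        - C (2 * h ^ 2) * derivative f
    P.natDegree = 3 * m - 1 ∧ P.leadingCoeff = -(m : ℝ) ^ 3 * f.coeff m ^ 3 ∧ P ≠ 0 := by
  intro P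
  set d := derivative f with hd
  -- coefficient of d at m-1
  have hcast : ((m - 1 : ℕ) : ℝ) + 1 = (m : ℝ) := by
    have : ((m - 1 : ℕ) : ℝ) = (m : ℝ) - 1 := by
      rw [Nat.cast_sub (by omega)]; simp
    rw [this]; ring
  have hdc : d.coeff (m - 1) = (m : ℝ) * f.coeff m := by
    rw [hd, coeff_derivative]
    have hm1 : m - 1 + 1 = m := by omega
    rw [hm1, hcast]; ring
  have hdcne : d.coeff (m - 1) ≠ 0 := by
    rw [hdc]
    exact mul_ne_zero (by positivity) ha
  have hdne : d ≠ 0 := fun h0 => hdcne (by simp [h0])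
  have hddeg : d.natDegree = m - 1 := by
    refine le_antisymm ?_ (le_natDegree_of_ne_zero hdcne)
    calc d.natDegree ≤ f.natDegree - 1 := natDegree_derivative_le f
      _ = m - 1 := by rw [hdeg]
  have hdlc : d.leadingCoeff = (m : ℝ) * f.coeff m := by
    rw [leadingCoeff, hddeg, hdc]
  -- the dominant term
  set T : ℝ[X] := X ^ 2 * d ^ 3 with hT
  have hTdeg : T.natDegree = 3 * m - 1 := by
    rw [hT, natDegree_mul (pow_ne_zero _ X_ne_zero) (pow_ne_zero _ hdne),
      natDegree_X_pow, natDegree_pow, hddeg]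
    omega
  have hTlc : T.leadingCoeff = ((m : ℝ) * f.coeff m) ^ 3 := by
    simp [hT, leadingCoeff_mul, leadingCoeff_pow, leadingCoeff_X, hdlc]
  -- the remainder
  set Q : ℝ[X] := X ^ 2 * d + X * (X ^ 2 - C (h ^ 2)) * derivative d - C (2 * h ^ 2) * d
    with hQ
  have hQdeg : Q.natDegree ≤ m + 1 := by
    rw [hQ]
    refine (natDegree_sub_le _ _).trans
      (max_le ((natDegree_add_le _ _).trans (max_le ?_ ?_)) ?_) <;>
      refine (natDegree_mul_le).trans ?_
    · simp [hddeg]; omega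
    · have h1 : (X * (X ^ 2 - C (h ^ 2)) : ℝ[X]).natDegree ≤ 3 := by
        refine natDegree_mul_le.trans ?_
        have : ((X ^ 2 - C (h ^ 2) : ℝ[X])).natDegree ≤ 2 :=
          (natDegree_sub_le _ _).trans (by simp)
        have h4 : (X : ℝ[X]).natDegree = 1 := natDegree_X
        omega
      have h2 : (derivative d).natDegree ≤ m - 2 := by
        calc (derivative d).natDegree ≤ d.natDegree - 1 := natDegree_derivative_le d
          _ ≤ m - 2 := by omega
      omega
    · have h5 : (C (2 * h ^ 2) : ℝ[X]).natDegree = 0 := natDegree_C _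
      omega
  have hPQT : P = Q - T := by
    show _ = _
    rw [hQ, hT]; ring
  have hlt : Q.natDegree < T.natDegree := by
    rw [hTdeg]; omega
  have hPdeg : P.natDegree = 3 * m - 1 := by
    rw [hPQT, natDegree_sub_eq_right_of_natDegree_lt hlt, hTdeg]
  have hTlcne : T.leadingCoeff ≠ 0 := by
    rw [hTlc]
    exact pow_ne_zero _ (mul_ne_zero (by positivity) ha)
  have hPlc : P.leadingCoeff = -(m : ℝ) ^ 3 * f.coeff m ^ 3 := by
    rw [leadingCoeff, hPdeg, hPQT, coeff_sub]
    have hQc : Q.coeff (3 * m - 1) = 0 :=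
      coeff_eq_zero_of_natDegree_lt (lt_of_le_of_lt hQdeg (by omega))
    have hTc : T.coeff (3 * m - 1) = T.leadingCoeff := by
      rw [leadingCoeff, hTdeg]
    rw [hQc, hTc, hTlc]; ring
  refine ⟨hPdeg, hPlc, fun h0 => ?_⟩
  have hne : -(m : ℝ) ^ 3 * f.coeff m ^ 3 ≠ 0 := by
    apply mul_ne_zero
    · simp only [ne_eq, neg_eq_zero]
      exact pow_ne_zero _ (Nat.cast_ne_zero.mpr (by omega))
    · exact pow_ne_zero _ ha
  rw [h0, leadingCoeff_zero] at hPlc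
  exact hne hPlc.symm
end

section
/- Let h ≠ 0 and f(s) = a₁ s + a₀ with a₁ = 1 or a₁ = -1. Then for the helicoidal surface X(s,t) = (s cos t, s sin t, ht + f(s)) in Minkowski space E₁³ (with metric dx² + dy² - dz²), the first fundamental form satisfies EG - F² = -h² (so the surface is timelike), and the mean curvature satisfies H² = 1/h². -/
noncomputable section

/-- Lorentzian inner product on Minkowski 3-space. -/
def mink (u v : ℝ × ℝ × ℝ) : ℝ := u.1 * v.1 + u.2.1 * v.2.1 - u.2.2 * v.2.2

/-- Determinant of the 3×3 matrix with columns `u,v,w`. -/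
def det3 (u v w : ℝ × ℝ × ℝ) : ℝ :=
  u.1 * (v.2.1 * w.2.2 - v.2.2 * w.2.1)
    - u.2.1 * (v.1 * w.2.2 - v.2.2 * w.1)
    + u.2.2 * (v.1 * w.2.1 - v.2.1 * w.1)

/-- Partial derivative with respect to the first parameter. -/
def pd1 (X : ℝ → ℝ → ℝ × ℝ × ℝ) : ℝ → ℝ → ℝ × ℝ × ℝ := fun s t => deriv (fun u => X u t) s

/-- Partial derivative with respect to the second parameter. -/
def pd2 (X : ℝ → ℝ → ℝ × ℝ × ℝ) : ℝ → ℝ → ℝ × ℝ × ℝ := fun s t => deriv (fun u => X s u) t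

def Ecoef (X : ℝ → ℝ → ℝ × ℝ × ℝ) (s t : ℝ) : ℝ := mink (pd1 X s t) (pd1 X s t)
def Fcoef (X : ℝ → ℝ → ℝ × ℝ × ℝ) (s t : ℝ) : ℝ := mink (pd1 X s t) (pd2 X s t)
def Gcoef (X : ℝ → ℝ → ℝ × ℝ × ℝ) (s t : ℝ) : ℝ := mink (pd2 X s t) (pd2 X s t)

/-- `W = EG - F²`. -/
def Wform (X : ℝ → ℝ → ℝ × ℝ × ℝ) (s t : ℝ) : ℝ :=
  Ecoef X s t * Gcoef X s t - Fcoef X s t ^ 2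

/-- Numerator `H₁ = G·det(Xs,Xt,Xss) - 2F·det(Xs,Xt,Xst) + E·det(Xs,Xt,Xtt)`. -/
def H1 (X : ℝ → ℝ → ℝ × ℝ × ℝ) (s t : ℝ) : ℝ :=
  Gcoef X s t * det3 (pd1 X s t) (pd2 X s t) (pd1 (pd1 X) s t)
    - 2 * Fcoef X s t * det3 (pd1 X s t) (pd2 X s t) (pd2 (pd1 X) s t)
    + Ecoef X s t * det3 (pd1 X s t) (pd2 X s t) (pd2 (pd2 X) s t)

/-- `K₁ = det(Xs,Xt,Xss)·det(Xs,Xt,Xtt) - det(Xs,Xt,Xst)²`. -/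
def K1 (X : ℝ → ℝ → ℝ × ℝ × ℝ) (s t : ℝ) : ℝ :=
  det3 (pd1 X s t) (pd2 X s t) (pd1 (pd1 X) s t)
      * det3 (pd1 X s t) (pd2 X s t) (pd2 (pd2 X) s t)
    - det3 (pd1 X s t) (pd2 X s t) (pd2 (pd1 X) s t) ^ 2

/-- Mean curvature of a timelike surface (`ε = 1`, `W < 0`). -/
def Hmean (X : ℝ → ℝ → ℝ × ℝ × ℝ) (s t : ℝ) : ℝ :=
  -(1 / 2) * H1 X s t / (-(Wform X s t)) ^ ((3 : ℝ) / 2)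

/-- Gauss curvature `K = -K₁/W²`. -/
def Kcurv (X : ℝ → ℝ → ℝ × ℝ × ℝ) (s t : ℝ) : ℝ :=
  -(K1 X s t) / (Wform X s t) ^ 2

/-! With profile `f`, `X_s = (cos t, sin t, f')` and `X_t = (-s sin t, s cos t, h)`, so
`E = 1 - f'²`, `F = -h f'`, `G = s² - h²` and `W = s²(1 - f'²) - h²`. For a linear profile with
`f' = ±1` this gives `W = -h²` and `H₁ = -2h² f'`, whence `H² = 4h⁴ / (4h⁶) = 1/h²`. -/

open Real

def helicoid (h : ℝ) (f : ℝ → ℝ) : ℝ → ℝ → ℝ × ℝ × ℝ :=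
  fun s t => (s * cos t, s * sin t, h * t + f s)

section helicoid

variable (h : ℝ) {f : ℝ → ℝ}

lemma pd1_helicoid (hf : Differentiable ℝ f) :
    pd1 (helicoid h f) = fun s t => (cos t, sin t, deriv f s) := by
  funext s t
  refine HasDerivAt.deriv (.prodMk ?_ (.prodMk ?_ ?_))
  · simpa using (hasDerivAt_id s).mul_const (cos t)
  · simpa using (hasDerivAt_id s).mul_const (sin t)
  · exact (hf s).hasDerivAt.const_add (h * t)

lemma pd2_helicoid :
    pd2 (helicoid h f) = fun s t => (-(s * sin t), s * cos t, h) := by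
  funext s t
  refine HasDerivAt.deriv (.prodMk ?_ (.prodMk ?_ ?_))
  · simpa [mul_comm] using (hasDerivAt_cos t).const_mul s
  · simpa [mul_comm] using (hasDerivAt_sin t).const_mul s
  · simpa using ((hasDerivAt_id t).const_mul h).add_const (f s)

lemma pd1_pd1_helicoid (hf : Differentiable ℝ f) (hf' : Differentiable ℝ (deriv f)) (s t : ℝ) :
    pd1 (pd1 (helicoid h f)) s t = (0, 0, deriv (deriv f) s) := by
  rw [pd1_helicoid h hf]
  exact ((hasDerivAt_const s (cos t)).prodMk
    ((hasDerivAt_const s (sin t)).prodMk (hf' s).hasDerivAt)).deriv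

lemma pd2_pd1_helicoid (hf : Differentiable ℝ f) (s t : ℝ) :
    pd2 (pd1 (helicoid h f)) s t = (-sin t, cos t, 0) := by
  rw [pd1_helicoid h hf]
  exact ((hasDerivAt_cos t).prodMk
    ((hasDerivAt_sin t).prodMk (hasDerivAt_const t (deriv f s)))).deriv

lemma pd2_pd2_helicoid (s t : ℝ) :
    pd2 (pd2 (helicoid h f)) s t = (-(s * cos t), -(s * sin t), 0) := by
  rw [pd2_helicoid]
  refine HasDerivAt.deriv (.prodMk ?_ (.prodMk ?_ (hasDerivAt_const t h)))
  · simpa [mul_comm] using ((hasDerivAt_sin t).const_mul s).fun_neg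
  · simpa [mul_comm] using (hasDerivAt_cos t).const_mul s

variable (s t : ℝ)

lemma Ecoef_helicoid (hf : Differentiable ℝ f) :
    Ecoef (helicoid h f) s t = 1 - deriv f s ^ 2 := by
  simp only [Ecoef, mink, pd1_helicoid h hf]
  linear_combination Real.cos_sq_add_sin_sq t

lemma Fcoef_helicoid (hf : Differentiable ℝ f) :
    Fcoef (helicoid h f) s t = -(h * deriv f s) := by
  simp only [Fcoef, mink, pd1_helicoid h hf, pd2_helicoid]
  ring

lemma Gcoef_helicoid : Gcoef (helicoid h f) s t = s ^ 2 - h ^ 2 := by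
  rw [Gcoef, pd2_helicoid]; simp only [mink]
  linear_combination s ^ 2 * Real.sin_sq_add_cos_sq t

lemma Wform_helicoid (hf : Differentiable ℝ f) :
    Wform (helicoid h f) s t = s ^ 2 * (1 - deriv f s ^ 2) - h ^ 2 := by
  rw [Wform, Ecoef_helicoid h s t hf, Fcoef_helicoid h s t hf, Gcoef_helicoid]
  ring

lemma H1_helicoid (hf : Differentiable ℝ f) (hf' : Differentiable ℝ (deriv f)) :
    H1 (helicoid h f) s t = (s ^ 2 - h ^ 2) * s * deriv (deriv f) s
      - 2 * h ^ 2 * deriv f s + (1 - deriv f s ^ 2) * s ^ 2 * deriv f s := by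
  rw [H1, Ecoef_helicoid h s t hf, Fcoef_helicoid h s t hf, Gcoef_helicoid,
    pd1_pd1_helicoid h hf hf', pd2_pd1_helicoid h hf, pd2_pd2_helicoid,
    pd1_helicoid h hf, pd2_helicoid]
  simp only [det3]
  linear_combination ((s ^ 2 - h ^ 2) * s * deriv (deriv f) s - 2 * h ^ 2 * deriv f s
    + (1 - deriv f s ^ 2) * s ^ 2 * deriv f s) * Real.sin_sq_add_cos_sq t

end helicoid

lemma Hmean_sq {X : ℝ → ℝ → ℝ × ℝ × ℝ} {s t : ℝ} (hW : Wform X s t ≤ 0) :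
    Hmean X s t ^ 2 = H1 X s t ^ 2 / (4 * (-Wform X s t) ^ 3) := by
  have hpow : ((-Wform X s t) ^ ((3 : ℝ) / 2)) ^ 2 = (-Wform X s t) ^ 3 := by
    rw [← Real.rpow_natCast, ← Real.rpow_mul (neg_nonneg.mpr hW)]
    norm_num
  rw [Hmean, div_pow, hpow]
  ring

/-- The helicoidal surface `X(s,t) = (s cos t, s sin t, ht + a₁ s + a₀)` with `a₁ = ±1`
is timelike with `EG - F² = -h²` and satisfies `H² = 1/h²`. -/
theorem stmt_1 (h a₀ a₁ : ℝ) (hh : h ≠ 0) (ha : a₁ = 1 ∨ a₁ = -1) :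
    let X : ℝ → ℝ → ℝ × ℝ × ℝ :=
      fun s t => (s * Real.cos t, s * Real.sin t, h * t + (a₁ * s + a₀))
    ∀ s t : ℝ, Wform X s t = -h ^ 2 ∧ (Hmean X s t) ^ 2 = 1 / h ^ 2 := by
  intro X s t
  have hX : X = helicoid h (fun s => a₁ * s + a₀) := rfl
  have hf : Differentiable ℝ (fun s => a₁ * s + a₀) := by fun_prop
  have hderiv : deriv (fun s => a₁ * s + a₀) = fun _ => a₁ := by
    funext s
    simp
  have ha₁ : a₁ ^ 2 = 1 := by rcases ha with rfl | rfl <;> norm_num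
  have hW : Wform X s t = -h ^ 2 := by
    rw [hX, Wform_helicoid h s t hf, hderiv, ha₁]
    ring
  have hH1 : H1 X s t = -(2 * a₁ * h ^ 2) := by
    rw [hX, H1_helicoid h s t hf (by rw [hderiv]; fun_prop), hderiv, deriv_const', ha₁]
    ring
  refine ⟨hW, ?_⟩
  rw [Hmean_sq (by rw [hW]; exact neg_nonpos.mpr (sq_nonneg h)), hW, hH1]
  field_simp
  linear_combination 4 * ha₁
end
end

section
/- Let h ≠ 0, a₁² = 1, a₀ ≠ 0, and consider the helicoidal surface with spacelike axis X(s,t) = (ht, (a₁ s + a₀) sinh t + s cosh t, (a₁ s + a₀) cosh t + s sinh t) in Minkowski 3-space. Then EG - F² = -a₀² < 0 (the surface is timelike), and both the mean curvature H and the Gauss curvature K vanish identically. -/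
noncomputable section

/-! The surface is ruled, `X(s,t) = β(t) + s δ(t)` with `β(t) = (ht, a₀ sinh t, a₀ cosh t)` and
`δ(t) = (0, a₁ sinh t + cosh t, a₁ cosh t + sinh t)`. Because `a₁² = 1`, `δ` is null and
`δ' = a₁ δ`, so all rulings are parallel to one null line. Then `E = 0`, `X_ss = 0` and
`X_st ∥ X_s`, which kills both `H₁` and `K₁`, while `EG - F² = -F²` with
`F = ⟨δ, β'⟩ = a₀ (cosh² t - sinh² t) = a₀`. -/

lemma det3_smul_right_eq_zero (u v : ℝ × ℝ × ℝ) (c : ℝ) : det3 u v (c • u) = 0 := by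
  simp only [det3, Prod.smul_fst, Prod.smul_snd, smul_eq_mul]
  ring

lemma mink_add_smul_right (u v w : ℝ × ℝ × ℝ) (c : ℝ) :
    mink u (v + c • w) = mink u v + c * mink u w := by
  simp only [mink, Prod.fst_add, Prod.snd_add, Prod.smul_fst, Prod.smul_snd, smul_eq_mul]
  ring

def ruledSurface (β δ : ℝ → ℝ × ℝ × ℝ) : ℝ → ℝ → ℝ × ℝ × ℝ := fun s t => β t + s • δ t

section RuledSurface

variable {β δ β' δ' : ℝ → ℝ × ℝ × ℝ}

lemma pd1_ruledSurface (β δ : ℝ → ℝ × ℝ × ℝ) : pd1 (ruledSurface β δ) = fun _ t => δ t := by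
  funext s t
  show deriv (fun u => β t + u • δ t) s = δ t
  simpa using (((hasDerivAt_id s).smul_const (δ t)).const_add (β t)).deriv

lemma pd1_pd1_ruledSurface (β δ : ℝ → ℝ × ℝ × ℝ) : pd1 (pd1 (ruledSurface β δ)) = 0 := by
  rw [pd1_ruledSurface]
  funext s t
  simp [pd1]

lemma pd2_ruledSurface (hβ : ∀ t, HasDerivAt β (β' t) t) (hδ : ∀ t, HasDerivAt δ (δ' t) t)
    (s t : ℝ) : pd2 (ruledSurface β δ) s t = β' t + s • δ' t :=
  ((hβ t).add ((hδ t).const_smul s)).deriv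

lemma pd2_pd1_ruledSurface (hδ : ∀ t, HasDerivAt δ (δ' t) t) (s t : ℝ) :
    pd2 (pd1 (ruledSurface β δ)) s t = δ' t := by
  rw [pd1_ruledSurface]
  exact (hδ t).deriv

variable {c : ℝ → ℝ}

lemma Ecoef_ruledSurface (hnull : ∀ t, mink (δ t) (δ t) = 0) (s t : ℝ) :
    Ecoef (ruledSurface β δ) s t = 0 := by
  simp only [Ecoef, pd1_ruledSurface, hnull]

lemma Fcoef_ruledSurface (hβ : ∀ t, HasDerivAt β (β' t) t)
    (hδ : ∀ t, HasDerivAt δ (c t • δ t) t) (hnull : ∀ t, mink (δ t) (δ t) = 0) (s t : ℝ) :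
    Fcoef (ruledSurface β δ) s t = mink (δ t) (β' t) := by
  simp only [Fcoef, pd1_ruledSurface, pd2_ruledSurface hβ hδ, smul_smul,
    mink_add_smul_right, hnull, mul_zero, add_zero]

lemma Wform_ruledSurface (hβ : ∀ t, HasDerivAt β (β' t) t)
    (hδ : ∀ t, HasDerivAt δ (c t • δ t) t) (hnull : ∀ t, mink (δ t) (δ t) = 0) (s t : ℝ) :
    Wform (ruledSurface β δ) s t = -mink (δ t) (β' t) ^ 2 := by
  simp only [Wform, Ecoef_ruledSurface hnull, Fcoef_ruledSurface hβ hδ hnull, zero_mul,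
    zero_sub]

lemma det3_pd2_pd1_ruledSurface (hδ : ∀ t, HasDerivAt δ (c t • δ t) t) (s t : ℝ) :
    det3 (pd1 (ruledSurface β δ) s t) (pd2 (ruledSurface β δ) s t)
      (pd2 (pd1 (ruledSurface β δ)) s t) = 0 := by
  rw [pd2_pd1_ruledSurface hδ, pd1_ruledSurface]
  exact det3_smul_right_eq_zero _ _ _

lemma H1_ruledSurface (hδ : ∀ t, HasDerivAt δ (c t • δ t) t)
    (hnull : ∀ t, mink (δ t) (δ t) = 0) (s t : ℝ) : H1 (ruledSurface β δ) s t = 0 := by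
  simp only [H1, pd1_pd1_ruledSurface, Ecoef_ruledSurface hnull, det3_pd2_pd1_ruledSurface hδ]
  simp [det3]

lemma K1_ruledSurface (hδ : ∀ t, HasDerivAt δ (c t • δ t) t) (s t : ℝ) :
    K1 (ruledSurface β δ) s t = 0 := by
  simp only [K1, det3_pd2_pd1_ruledSurface hδ]
  simp [pd1_pd1_ruledSurface, det3]

end RuledSurface

def nullRuling (a₁ t : ℝ) : ℝ × ℝ × ℝ :=
  (0, a₁ * Real.sinh t + Real.cosh t, a₁ * Real.cosh t + Real.sinh t)

lemma hasDerivAt_nullRuling {a₁ : ℝ} (ha1 : a₁ ^ 2 = 1) (t : ℝ) :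
    HasDerivAt (nullRuling a₁) (a₁ • nullRuling a₁ t) t := by
  refine HasDerivAt.congr_deriv ((hasDerivAt_const t (0 : ℝ)).prodMk
    ((((Real.hasDerivAt_sinh t).const_mul a₁).add (Real.hasDerivAt_cosh t)).prodMk
      (((Real.hasDerivAt_cosh t).const_mul a₁).add (Real.hasDerivAt_sinh t)))) ?_
  simp only [nullRuling, Prod.smul_mk, smul_eq_mul, mul_zero, Prod.mk.injEq, true_and]
  constructor
  · linear_combination -Real.sinh t * ha1
  · linear_combination -Real.cosh t * ha1

lemma mink_nullRuling_self {a₁ : ℝ} (ha1 : a₁ ^ 2 = 1) (t : ℝ) :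
    mink (nullRuling a₁ t) (nullRuling a₁ t) = 0 := by
  simp only [mink, nullRuling]
  linear_combination (1 - a₁ ^ 2) * Real.cosh_sq_sub_sinh_sq t - ha1

theorem stmt_5_general (h a₀ a₁ : ℝ) (ha1 : a₁ ^ 2 = 1) (ha0 : a₀ ≠ 0) :
    let X : ℝ → ℝ → ℝ × ℝ × ℝ := fun s t =>
      (h * t, (a₁ * s + a₀) * Real.sinh t + s * Real.cosh t,
        (a₁ * s + a₀) * Real.cosh t + s * Real.sinh t)
    ∀ s t : ℝ, Wform X s t = -a₀ ^ 2 ∧ Wform X s t < 0 ∧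
      Hmean X s t = 0 ∧ Kcurv X s t = 0 := by
  intro X s t
  set β : ℝ → ℝ × ℝ × ℝ := fun t => (h * t, a₀ * Real.sinh t, a₀ * Real.cosh t)
  have hX : X = ruledSurface β (nullRuling a₁) := by
    funext s t
    simp only [X, ruledSurface, β, nullRuling, Prod.smul_mk, smul_eq_mul, Prod.mk_add_mk,
      Prod.mk.injEq]
    refine ⟨by ring, by ring, by ring⟩
  have hβ (t : ℝ) : HasDerivAt β (h, a₀ * Real.cosh t, a₀ * Real.sinh t) t := by
    simpa using ((hasDerivAt_id t).const_mul h).prodMk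
      (((Real.hasDerivAt_sinh t).const_mul a₀).prodMk ((Real.hasDerivAt_cosh t).const_mul a₀))
  have hF : mink (nullRuling a₁ t) (h, a₀ * Real.cosh t, a₀ * Real.sinh t) = a₀ := by
    simp only [mink, nullRuling]
    linear_combination a₀ * Real.cosh_sq_sub_sinh_sq t
  have hW : Wform X s t = -a₀ ^ 2 := by
    rw [hX, Wform_ruledSurface hβ (hasDerivAt_nullRuling ha1) (mink_nullRuling_self ha1), hF]
  refine ⟨hW, by rw [hW]; exact neg_neg_of_pos (by positivity), ?_, ?_⟩
  · rw [Hmean, hX, H1_ruledSurface (hasDerivAt_nullRuling ha1) (mink_nullRuling_self ha1)]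
    simp
  · rw [Kcurv, hX, K1_ruledSurface (hasDerivAt_nullRuling ha1)]
    simp

/-- The helicoidal surface with spacelike axis
`X(s,t) = (ht, (a₁s+a₀) sinh t + s cosh t, (a₁s+a₀) cosh t + s sinh t)`, `a₁² = 1`,
`a₀ ≠ 0`, is timelike with `EG - F² = -a₀²`, and `H = 0`, `K = 0` identically. -/
theorem stmt_5 (h a₀ a₁ : ℝ) (hh : h ≠ 0) (ha1 : a₁ ^ 2 = 1) (ha0 : a₀ ≠ 0) :
    let X : ℝ → ℝ → ℝ × ℝ × ℝ := fun s t =>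
      (h * t, (a₁ * s + a₀) * Real.sinh t + s * Real.cosh t,
        (a₁ * s + a₀) * Real.cosh t + s * Real.sinh t)
    ∀ s t : ℝ, Wform X s t = -a₀ ^ 2 ∧ Wform X s t < 0 ∧
      Hmean X s t = 0 ∧ Kcurv X s t = 0 :=
  stmt_5_general h a₀ a₁ ha1 ha0
end
end

section
/- If f : ℝ → ℝ is a polynomial of degree m ≥ 1 with leading coefficient a_m ≠ 0 and h ≠ 0, then the polynomial s ↦ f'(s) - 2s·f''(s) has degree m - 1 with leading coefficient m·a_m·(3 - 2m); in particular, if m ≠ 3/2 (always true for integers m ≥ 1), this polynomial is not identically zero. Consequently, the helicoidal surface with lightlike axis X(s,t) = (st + h(t³/3 - t) + f(s), s + ht², st + h(t³/3 + t) + f(s)) has zero mean curvature only if f is constant. -/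
open Polynomial


/-- If `f` is a polynomial of degree `m ≥ 1` with leading coefficient `aₘ ≠ 0`, then
`f' - 2s·f''` has degree `m-1` with leading coefficient `m·aₘ·(3-2m)`; in particular
it does not vanish identically, so the lightlike-axis helicoidal surface generated by
the graph of `f` has zero mean curvature only if `f` is constant. -/
theorem stmt_9 (h : ℝ) (hh : h ≠ 0) (m : ℕ) (hm : 1 ≤ m) (f : ℝ[X])
    (hdeg : f.natDegree = m) (ha : f.coeff m ≠ 0) :
    let P : ℝ[X] := derivative f - 2 * X * derivative (derivative f)
    P.natDegree = m - 1 ∧ P.leadingCoeff = (m : ℝ) * f.coeff m * (3 - 2 * (m : ℝ)) ∧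
      ¬(∀ s : ℝ, P.eval s = 0) := by
  intro P
  -- the target leading coefficient is nonzero
  have h3 : (3 : ℝ) - 2 * (m : ℝ) ≠ 0 := by
    intro hb
    have : (2 * m : ℕ) = (3 : ℕ) := by
      have : (2 : ℝ) * (m : ℝ) = 3 := by linarith
      exact_mod_cast this
    omega
  have hmR : (m : ℝ) ≠ 0 := by
    exact Nat.cast_ne_zero.mpr (by omega)
  have hne : (m : ℝ) * f.coeff m * (3 - 2 * (m : ℝ)) ≠ 0 :=
    mul_ne_zero (mul_ne_zero hmR ha) h3
  -- compute coefficient at m - 1 and degree bound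
  have key : P.coeff (m - 1) = (m : ℝ) * f.coeff m * (3 - 2 * (m : ℝ)) ∧
      P.natDegree ≤ m - 1 := by
    rcases eq_or_lt_of_le hm with h1 | h2
    · -- m = 1
      have hd1 : (derivative f).natDegree = 0 := by
        have := natDegree_derivative_le f
        omega
      have hC : derivative f = C ((derivative f).coeff 0) :=
        eq_C_of_natDegree_le_zero hd1.le
      have hd2 : derivative (derivative f) = 0 := by
        rw [hC]; simp
      have hP : P = C ((derivative f).coeff 0) := by
        simp only [P, hd2]
        rw [← hC]; ring
      have hc0 : (derivative f).coeff 0 = f.coeff 1 * 1 := by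
        simpa using coeff_derivative f 0
      constructor
      · rw [hP, ← h1]
        simp [hc0]; ring
      · rw [hP]; simp
    · -- m ≥ 2
      obtain ⟨k, rfl⟩ : ∃ k, m = k + 2 := ⟨m - 2, by omega⟩
      have hd2 : (derivative (derivative f)).natDegree ≤ k := by
        have a1 := natDegree_derivative_le f
        have a2 := natDegree_derivative_le (derivative f)
        omega
      constructor
      · have hXm : (2 * X * derivative (derivative f)).coeff (k + 1)
            = 2 * (derivative (derivative f)).coeff k := by
          rw [mul_assoc, (map_ofNat C 2).symm, coeff_C_mul, coeff_X_mul]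
        show (derivative f - 2 * X * derivative (derivative f)).coeff (k + 2 - 1)
            = _
        rw [show k + 2 - 1 = k + 1 from rfl, coeff_sub, hXm, coeff_derivative,
          coeff_derivative, coeff_derivative]
        push_cast
        ring
      · refine (natDegree_sub_le _ _).trans (max_le ?_ ?_)
        · have := natDegree_derivative_le f
          omega
        · calc (2 * X * derivative (derivative f)).natDegree
              ≤ (2 * X : ℝ[X]).natDegree + (derivative (derivative f)).natDegree :=
                natDegree_mul_le
            _ ≤ 1 + k := by
                have : (2 * X : ℝ[X]).natDegree ≤ 1 := by
                  refine natDegree_mul_le.trans ?_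
                  simp
                omega
            _ ≤ k + 2 - 1 := by omega
  have hco : P.coeff (m - 1) ≠ 0 := key.1 ▸ hne
  have hdP : P.natDegree = m - 1 :=
    le_antisymm key.2 (le_natDegree_of_ne_zero hco)
  refine ⟨hdP, ?_, ?_⟩
  · rw [leadingCoeff, hdP, key.1]
  · intro hall
    have hP0 : P = 0 := by
      apply Polynomial.funext
      intro x
      simp [hall x]
    rw [hP0] at hco
    simp at hco
end

section
/- If f : ℝ → ℝ is a polynomial of degree m ≥ 2 with leading coefficient a_m ≠ 0 and h ≠ 0, then the function s ↦ (h(f'(s) - 2s f''(s)))² - 4(s + h f'(s)²)(1 + 2h f'(s) f''(s)) is a polynomial of degree 4m - 5 with leading coefficient -8h²·m⁴·(m-1)·a_m⁴; in particular it is not identically zero. Hence no helicoidal timelike surface with lightlike axis generated by the graph of a polynomial of degree ≥ 2 satisfies H² - K = 0. -/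
open Polynomial


/-- If `f` has degree `m ≥ 2` with `aₘ ≠ 0` and `h ≠ 0`, then
`(h(f' - 2sf''))² - 4(s + hf'²)(1 + 2hf'f'')` is a polynomial of degree `4m-5` with
leading coefficient `-8h²m⁴(m-1)aₘ⁴`; in particular it is not identically zero, so no
timelike helicoidal surface with lightlike axis generated by the graph of a polynomial
of degree `≥ 2` satisfies `H² - K = 0`. -/
theorem stmt_16 (h : ℝ) (hh : h ≠ 0) (m : ℕ) (hm : 2 ≤ m) (f : ℝ[X])
    (hdeg : f.natDegree = m) (ha : f.coeff m ≠ 0) :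
    let P : ℝ[X] :=
      (C h * (derivative f - 2 * X * derivative (derivative f))) ^ 2
        - 4 * (X + C h * derivative f ^ 2)
          * (1 + C (2 * h) * derivative f * derivative (derivative f))
    P.natDegree = 4 * m - 5 ∧
      P.leadingCoeff = -8 * h ^ 2 * (m : ℝ) ^ 4 * ((m : ℝ) - 1) * f.coeff m ^ 4 ∧
      P ≠ 0 := by
  intro P
  obtain ⟨k, rfl⟩ : ∃ k, m = k + 2 := ⟨m - 2, by omega⟩
  set a : ℝ := f.coeff (k + 2) with ha'
  set d1 : ℝ[X] := derivative f with hd1def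
  set d2 : ℝ[X] := derivative d1 with hd2def
  -- first derivative
  have hd1c : d1.coeff (k + 1) = a * (k + 2) := by
    rw [hd1def, coeff_derivative]
    try push_cast
    try ring
  have hd1cne : d1.coeff (k + 1) ≠ 0 := by
    rw [hd1c]
    positivity
  have hd1le : d1.natDegree ≤ k + 1 := by
    rw [hd1def]
    have := natDegree_derivative_le f
    omega
  have hd1deg : d1.natDegree = k + 1 := natDegree_eq_of_le_of_coeff_ne_zero hd1le hd1cne
  have hd1lead : d1.leadingCoeff = a * (k + 2) := by
    rw [leadingCoeff, hd1deg]; exact hd1c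
  have hd1ne : d1 ≠ 0 := fun h0 => hd1cne (by rw [h0, coeff_zero])
  -- second derivative
  have hd2c : d2.coeff k = a * (k + 2) * (k + 1) := by
    rw [hd2def, coeff_derivative, hd1c]
    try push_cast
    try ring
  have hd2cne : d2.coeff k ≠ 0 := by
    rw [hd2c]
    positivity
  have hd2le : d2.natDegree ≤ k := by
    rw [hd2def]
    have := natDegree_derivative_le d1
    omega
  have hd2deg : d2.natDegree = k := natDegree_eq_of_le_of_coeff_ne_zero hd2le hd2cne
  have hd2lead : d2.leadingCoeff = a * (k + 2) * (k + 1) := by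
    rw [leadingCoeff, hd2deg]; exact hd2c
  have hd2ne : d2 ≠ 0 := fun h0 => hd2cne (by rw [h0, coeff_zero])
  -- Q1 = X + C h * d1 ^ 2
  set Q1 : ℝ[X] := X + C h * d1 ^ 2 with hQ1def
  have hp2deg : (d1 ^ 2).natDegree = 2 * (k + 1) := by
    rw [natDegree_pow, hd1deg]
  have hp2lead : (d1 ^ 2).leadingCoeff = (a * (k + 2)) ^ 2 := by
    rw [leadingCoeff_pow, hd1lead]
  have hQ1c : Q1.coeff (2 * k + 2) = h * (a * (k + 2)) ^ 2 := by
    rw [hQ1def, coeff_add, coeff_C_mul, coeff_X]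
    have h1 : (1 : ℕ) ≠ 2 * k + 2 := by omega
    rw [if_neg h1]
    have : (d1 ^ 2).coeff (2 * k + 2) = (d1 ^ 2).leadingCoeff := by
      rw [leadingCoeff, hp2deg, show 2 * (k + 1) = 2 * k + 2 from by omega]
    rw [this, hp2lead]
    ring
  have hQ1cne : Q1.coeff (2 * k + 2) ≠ 0 := by
    rw [hQ1c]
    have : (a * (k + 2)) ^ 2 ≠ 0 := by positivity
    exact mul_ne_zero hh this
  have hQ1le : Q1.natDegree ≤ 2 * k + 2 := by
    rw [hQ1def]
    refine (natDegree_add_le _ _).trans (max_le ?_ ?_)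
    · rw [natDegree_X]; omega
    · refine (natDegree_mul_le).trans ?_
      rw [natDegree_C, hp2deg]; omega
  have hQ1deg : Q1.natDegree = 2 * k + 2 := natDegree_eq_of_le_of_coeff_ne_zero hQ1le hQ1cne
  have hQ1lead : Q1.leadingCoeff = h * (a * (k + 2)) ^ 2 := by
    rw [leadingCoeff, hQ1deg]; exact hQ1c
  have hQ1ne : Q1 ≠ 0 := fun h0 => hQ1cne (by rw [h0, coeff_zero])
  -- Q2 = 1 + C (2h) * d1 * d2
  set Q2 : ℝ[X] := 1 + C (2 * h) * d1 * d2 with hQ2def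
  have hp12deg : (d1 * d2).natDegree = 2 * k + 1 := by
    rw [natDegree_mul hd1ne hd2ne, hd1deg, hd2deg]; omega
  have hp12lead : (d1 * d2).leadingCoeff = (a * (k + 2)) * (a * (k + 2) * (k + 1)) := by
    rw [leadingCoeff_mul, hd1lead, hd2lead]
  have hQ2c : Q2.coeff (2 * k + 1) = 2 * h * ((a * (k + 2)) * (a * (k + 2) * (k + 1))) := by
    rw [hQ2def, mul_assoc, coeff_add, coeff_C_mul, coeff_one]
    have h1 : (2 * k + 1 : ℕ) ≠ 0 := by omega
    rw [if_neg h1]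
    have : (d1 * d2).coeff (2 * k + 1) = (d1 * d2).leadingCoeff := by
      rw [leadingCoeff, hp12deg]
    rw [this, hp12lead]
    ring
  have hQ2cne : Q2.coeff (2 * k + 1) ≠ 0 := by
    rw [hQ2c]
    have h2 : ((a * (k + 2)) * (a * (k + 2) * (k + 1)) : ℝ) ≠ 0 := by positivity
    have h3 : (2 * h : ℝ) ≠ 0 := by positivity
    exact mul_ne_zero h3 h2
  have hQ2le : Q2.natDegree ≤ 2 * k + 1 := by
    rw [hQ2def]
    refine (natDegree_add_le _ _).trans (max_le ?_ ?_)
    · rw [natDegree_one]; omega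
    · rw [mul_assoc]
      refine (natDegree_mul_le).trans ?_
      rw [natDegree_C, hp12deg]; omega
  have hQ2deg : Q2.natDegree = 2 * k + 1 := natDegree_eq_of_le_of_coeff_ne_zero hQ2le hQ2cne
  have hQ2lead : Q2.leadingCoeff = 2 * h * ((a * (k + 2)) * (a * (k + 2) * (k + 1))) := by
    rw [leadingCoeff, hQ2deg]; exact hQ2c
  have hQ2ne : Q2 ≠ 0 := fun h0 => hQ2cne (by rw [h0, coeff_zero])
  -- Big = 4 * Q1 * Q2
  set B : ℝ[X] := 4 * Q1 * Q2 with hBdef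
  have h4ne : (4 : ℝ[X]) ≠ 0 := by norm_num
  have hBdeg : B.natDegree = 4 * k + 3 := by
    rw [hBdef, natDegree_mul (mul_ne_zero h4ne hQ1ne) hQ2ne, natDegree_mul h4ne hQ1ne,
      natDegree_ofNat, hQ1deg, hQ2deg]
    omega
  have h4lead : (4 : ℝ[X]).leadingCoeff = 4 := by
    have h4 : (4 : ℝ[X]) = C 4 := by
      rw [show ((4 : ℝ)) = ((4 : ℕ) : ℝ) by norm_num, C_eq_natCast]
      norm_num
    rw [h4, leadingCoeff_C]
  have hBlead : B.leadingCoeff =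
      4 * (h * (a * (k + 2)) ^ 2) * (2 * h * ((a * (k + 2)) * (a * (k + 2) * (k + 1)))) := by
    rw [hBdef, leadingCoeff_mul, leadingCoeff_mul, h4lead, hQ1lead, hQ2lead]
  have hBne : B ≠ 0 := by
    rw [hBdef]; exact mul_ne_zero (mul_ne_zero h4ne hQ1ne) hQ2ne
  -- A = C h * (d1 - 2 * X * d2), A ^ 2 has small degree
  set A : ℝ[X] := C h * (d1 - 2 * X * d2) with hAdef
  have hAle : A.natDegree ≤ k + 1 := by
    rw [hAdef]
    have h2X : (2 * X : ℝ[X]).natDegree ≤ 1 := by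
      refine (natDegree_mul_le).trans ?_
      simp [natDegree_X]
    have h2Xd2 : (2 * X * d2 : ℝ[X]).natDegree ≤ k + 1 := by
      refine (natDegree_mul_le).trans ?_
      omega
    have hsub : (d1 - 2 * X * d2).natDegree ≤ k + 1 :=
      (natDegree_sub_le _ _).trans (max_le (by omega) h2Xd2)
    refine (natDegree_mul_le).trans ?_
    rw [natDegree_C]
    omega
  have hA2le : (A ^ 2).natDegree ≤ 2 * k + 2 := by
    refine (natDegree_pow_le).trans ?_
    omega
  have hA2c : (A ^ 2).coeff (4 * k + 3) = 0 :=
    coeff_eq_zero_of_natDegree_lt (by omega)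
  -- conclude about P
  have hPeq : P = A ^ 2 - B := rfl
  have hPc : P.coeff (4 * k + 3) = -B.leadingCoeff := by
    rw [hPeq, coeff_sub, hA2c]
    rw [show B.leadingCoeff = B.coeff (4 * k + 3) by rw [leadingCoeff, hBdeg]]
    ring
  have hBleadne : B.leadingCoeff ≠ 0 := leadingCoeff_ne_zero.mpr hBne
  have hPcne : P.coeff (4 * k + 3) ≠ 0 := by
    rw [hPc]; exact neg_ne_zero.mpr hBleadne
  have hPle : P.natDegree ≤ 4 * k + 3 := by
    rw [hPeq]
    refine (natDegree_sub_le _ _).trans ?_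
    rw [hBdeg]
    omega
  have hPdeg : P.natDegree = 4 * k + 3 := natDegree_eq_of_le_of_coeff_ne_zero hPle hPcne
  have hPne : P ≠ 0 := fun h0 => hPcne (by rw [h0, coeff_zero])
  refine ⟨by rw [hPdeg]; omega, ?_, hPne⟩
  rw [leadingCoeff, hPdeg, hPc, hBlead]
  push_cast
  ring
end

section
/- For the helicoidal surface with spacelike axis generated by a Lorentzian circle, X(s,t) = (ht, λ cosh t + μ sinh t + r cosh(s+t+θ), λ sinh t + μ cosh t + r sinh(s+t+θ)) with r > 0 and h ≠ 0, the numerator of the mean curvature equals h r²·(-λ² + μ² + h² - rλ cosh(s+θ) + rμ sinh(s+θ)); consequently the surface has H = 0 identically only if λ = μ = 0 and h = 0, which is impossible, so the surface is never minimal. -/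
noncomputable section

/-!
The surface is the orbit of the Lorentzian circle `γ(s) = (0, λ + r cosh(s+θ), μ + r sinh(s+θ))`
under the screw motions `v ↦ B_t v + (ht, 0, 0)`, where `B_t` is the boost of the `yz`-plane.
Its partial derivatives up to order two at `(s, t)` are `B_t` applied to vectors depending on
`s` only, and `B_t` preserves both the Lorentzian product and the determinant, so `H₁` can be
computed at `t = 0`, where it is a short computation using `cosh² - sinh² = 1`. If `H₁`
vanished, the independence of `1, cosh, sinh` would force `rλ = rμ = 0` and then `h² = 0`.
-/

open Real

namespace Minkowski

def boost (t : ℝ) : (ℝ × ℝ × ℝ) →L[ℝ] ℝ × ℝ × ℝ :=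
  LinearMap.toContinuousLinearMap
    { toFun := fun v => (v.1, cosh t * v.2.1 + sinh t * v.2.2, sinh t * v.2.1 + cosh t * v.2.2)
      map_add' := fun u v => by ext <;> simp only [Prod.fst_add, Prod.snd_add] <;> ring
      map_smul' := fun c v => by
        ext <;> simp only [Prod.smul_fst, Prod.smul_snd, smul_eq_mul, RingHom.id_apply] <;> ring }

@[simp]
theorem boost_apply (t : ℝ) (v : ℝ × ℝ × ℝ) :
    boost t v = (v.1, cosh t * v.2.1 + sinh t * v.2.2, sinh t * v.2.1 + cosh t * v.2.2) :=
  rfl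

def boostGenerator (v : ℝ × ℝ × ℝ) : ℝ × ℝ × ℝ := (0, v.2.2, v.2.1)

theorem mink_boost (t : ℝ) (u v : ℝ × ℝ × ℝ) :
    mink (boost t u) (boost t v) = mink u v := by
  simp only [mink, boost_apply]
  linear_combination (u.2.1 * v.2.1 - u.2.2 * v.2.2) * cosh_sq_sub_sinh_sq t

theorem det3_boost (t : ℝ) (u v w : ℝ × ℝ × ℝ) :
    det3 (boost t u) (boost t v) (boost t w) = det3 u v w := by
  simp only [det3, boost_apply]
  linear_combination (u.1 * (v.2.1 * w.2.2 - v.2.2 * w.2.1) - u.2.1 * (v.1 * w.2.2 - v.2.2 * w.1)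
    + u.2.2 * (v.1 * w.2.1 - v.2.1 * w.1)) * cosh_sq_sub_sinh_sq t

theorem hasDerivAt_boost (v : ℝ × ℝ × ℝ) (t : ℝ) :
    HasDerivAt (fun t => boost t v) (boost t (boostGenerator v)) t := by
  have hy : HasDerivAt (fun t => cosh t * v.2.1 + sinh t * v.2.2)
      (cosh t * v.2.2 + sinh t * v.2.1) t :=
    (((hasDerivAt_cosh t).mul_const _).add ((hasDerivAt_sinh t).mul_const _)).congr_deriv (by ring)
  have hz : HasDerivAt (fun t => sinh t * v.2.1 + cosh t * v.2.2)
      (sinh t * v.2.2 + cosh t * v.2.1) t :=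
    (((hasDerivAt_sinh t).mul_const _).add ((hasDerivAt_cosh t).mul_const _)).congr_deriv (by ring)
  exact (hasDerivAt_const t v.1).prodMk (hy.prodMk hz)

theorem hasDerivAt_boost_comp {γ : ℝ → ℝ × ℝ × ℝ} {γ' : ℝ × ℝ × ℝ} {s : ℝ}
    (hγ : HasDerivAt γ γ' s) (t : ℝ) : HasDerivAt (fun u => boost t (γ u)) (boost t γ') s :=
  (boost t).hasFDerivAt.comp_hasDerivAt s hγ

theorem pd1_eq_of_hasDerivAt {X X' : ℝ → ℝ → ℝ × ℝ × ℝ}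
    (hX : ∀ s t, HasDerivAt (fun u => X u t) (X' s t) s) : pd1 X = X' :=
  funext₂ fun s t => (hX s t).deriv

theorem pd2_eq_of_hasDerivAt {X X' : ℝ → ℝ → ℝ × ℝ × ℝ}
    (hX : ∀ s t, HasDerivAt (fun u => X s u) (X' s t) t) : pd2 X = X' :=
  funext₂ fun s t => (hX s t).deriv

def meanCurvatureNumerator (xs xt xss xst xtt : ℝ × ℝ × ℝ) : ℝ :=
  mink xt xt * det3 xs xt xss - 2 * mink xs xt * det3 xs xt xst + mink xs xs * det3 xs xt xtt

theorem H1_eq_meanCurvatureNumerator (X : ℝ → ℝ → ℝ × ℝ × ℝ) (s t : ℝ) :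
    H1 X s t = meanCurvatureNumerator (pd1 X s t) (pd2 X s t) (pd1 (pd1 X) s t)
      (pd2 (pd1 X) s t) (pd2 (pd2 X) s t) :=
  rfl

theorem meanCurvatureNumerator_boost (t : ℝ) (xs xt xss xst xtt : ℝ × ℝ × ℝ) :
    meanCurvatureNumerator (boost t xs) (boost t xt) (boost t xss) (boost t xst) (boost t xtt) =
      meanCurvatureNumerator xs xt xss xst xtt := by
  simp only [meanCurvatureNumerator, mink_boost, det3_boost]

def helicoidalSurface (h : ℝ) (γ : ℝ → ℝ × ℝ × ℝ) (s t : ℝ) : ℝ × ℝ × ℝ :=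
  boost t (γ s) + (h * t, 0, 0)

section Helicoidal

variable {γ γ' γ'' : ℝ → ℝ × ℝ × ℝ}

theorem pd1_helicoidalSurface (hγ : ∀ s, HasDerivAt γ (γ' s) s) (h : ℝ) :
    pd1 (helicoidalSurface h γ) = fun s t => boost t (γ' s) :=
  pd1_eq_of_hasDerivAt fun s t => (hasDerivAt_boost_comp (hγ s) t).add_const _

theorem pd2_helicoidalSurface (h : ℝ) :
    pd2 (helicoidalSurface h γ) = fun s t => boost t (boostGenerator (γ s) + (h, 0, 0)) := by
  refine pd2_eq_of_hasDerivAt fun s t => ?_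
  have hshift : HasDerivAt (fun u : ℝ => (h * u, (0 : ℝ), (0 : ℝ))) (h, 0, 0) t :=
    ((hasDerivAt_id t).const_mul h |>.congr_deriv (mul_one h)).prodMk
      ((hasDerivAt_const t 0).prodMk (hasDerivAt_const t 0))
  rw [map_add, show boost t (h, 0, 0) = (h, 0, 0) by simp]
  exact (hasDerivAt_boost (γ s) t).add hshift

theorem H1_helicoidalSurface (hγ : ∀ s, HasDerivAt γ (γ' s) s)
    (hγ' : ∀ s, HasDerivAt γ' (γ'' s) s) (h s t : ℝ) :
    H1 (helicoidalSurface h γ) s t =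
      meanCurvatureNumerator (γ' s) (boostGenerator (γ s) + (h, 0, 0)) (γ'' s)
        (boostGenerator (γ' s)) (boostGenerator (boostGenerator (γ s) + (h, 0, 0))) := by
  have h11 : pd1 (pd1 (helicoidalSurface h γ)) = fun s t => boost t (γ'' s) := by
    rw [pd1_helicoidalSurface hγ]
    exact pd1_eq_of_hasDerivAt fun s t => hasDerivAt_boost_comp (hγ' s) t
  have h21 : pd2 (pd1 (helicoidalSurface h γ)) = fun s t => boost t (boostGenerator (γ' s)) := by
    rw [pd1_helicoidalSurface hγ]
    exact pd2_eq_of_hasDerivAt fun s t => hasDerivAt_boost (γ' s) t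
  have h22 : pd2 (pd2 (helicoidalSurface h γ)) =
      fun s t => boost t (boostGenerator (boostGenerator (γ s) + (h, 0, 0))) := by
    rw [pd2_helicoidalSurface]
    exact pd2_eq_of_hasDerivAt fun s t => hasDerivAt_boost _ t
  rw [H1_eq_meanCurvatureNumerator, h11, h21, h22, pd1_helicoidalSurface hγ,
    pd2_helicoidalSurface, meanCurvatureNumerator_boost]

end Helicoidal

def lorentzCircle (lam mu r θ s : ℝ) : ℝ × ℝ × ℝ :=
  (0, lam + r * cosh (s + θ), mu + r * sinh (s + θ))

section LorentzCircle

variable (lam mu r θ : ℝ)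

theorem hasDerivAt_lorentzCircle (s : ℝ) :
    HasDerivAt (lorentzCircle lam mu r θ) (0, r * sinh (s + θ), r * cosh (s + θ)) s := by
  have hs := (hasDerivAt_id' s).add_const θ
  have hy : HasDerivAt (fun s => lam + r * cosh (s + θ)) (r * sinh (s + θ)) s :=
    ((hs.cosh.const_mul r).const_add lam).congr_deriv (by simp)
  have hz : HasDerivAt (fun s => mu + r * sinh (s + θ)) (r * cosh (s + θ)) s :=
    ((hs.sinh.const_mul r).const_add mu).congr_deriv (by simp)
  exact (hasDerivAt_const s 0).prodMk (hy.prodMk hz)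

theorem hasDerivAt_deriv_lorentzCircle (s : ℝ) :
    HasDerivAt (fun s => ((0 : ℝ), r * sinh (s + θ), r * cosh (s + θ)))
      (0, r * cosh (s + θ), r * sinh (s + θ)) s := by
  have hs := (hasDerivAt_id' s).add_const θ
  have hy : HasDerivAt (fun s => r * sinh (s + θ)) (r * cosh (s + θ)) s :=
    (hs.sinh.const_mul r).congr_deriv (by simp)
  have hz : HasDerivAt (fun s => r * cosh (s + θ)) (r * sinh (s + θ)) s :=
    (hs.cosh.const_mul r).congr_deriv (by simp)
  exact (hasDerivAt_const s 0).prodMk (hy.prodMk hz)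

theorem H1_helicoidalSurface_lorentzCircle (h s t : ℝ) :
    H1 (helicoidalSurface h (lorentzCircle lam mu r θ)) s t =
      h * r ^ 2 * (-lam ^ 2 + mu ^ 2 + h ^ 2
        - r * lam * cosh (s + θ) + r * mu * sinh (s + θ)) := by
  rw [H1_helicoidalSurface (hasDerivAt_lorentzCircle lam mu r θ)
    (hasDerivAt_deriv_lorentzCircle r θ)]
  simp only [meanCurvatureNumerator, mink, det3, boostGenerator, lorentzCircle, Prod.fst_add,
    Prod.snd_add]
  linear_combination h * r ^ 2 * (h ^ 2 + mu ^ 2 - lam ^ 2 - r * lam * cosh (s + θ)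
    + r * mu * sinh (s + θ)) * cosh_sq_sub_sinh_sq (s + θ)

theorem helicoidalSurface_lorentzCircle (h : ℝ) :
    helicoidalSurface h (lorentzCircle lam mu r θ) = fun s t =>
      (h * t, lam * cosh t + mu * sinh t + r * cosh (s + t + θ),
        lam * sinh t + mu * cosh t + r * sinh (s + t + θ)) := by
  funext s t
  rw [add_right_comm s t θ, cosh_add (s + θ) t, sinh_add (s + θ) t]
  simp only [helicoidalSurface, lorentzCircle, boost_apply, Prod.mk_add_mk]
  ext <;> ring

end LorentzCircle

theorem eq_zero_of_forall_add_mul_cosh_add_mul_sinh_eq_zero {a b c : ℝ}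
    (h : ∀ x, a + b * cosh x + c * sinh x = 0) : a = 0 ∧ b = 0 ∧ c = 0 := by
  have h0 := h 0
  have h1 := h 1
  have hm1 := h (-1)
  rw [cosh_zero, sinh_zero] at h0
  rw [cosh_neg, sinh_neg] at hm1
  have hb' : b * (cosh 1 - 1) = 0 := by linarith
  have hb : b = 0 :=
    (mul_eq_zero.mp hb').resolve_right (sub_ne_zero.mpr (one_lt_cosh.mpr one_ne_zero).ne')
  have hc' : c * sinh 1 = 0 := by linarith
  have hc : c = 0 := (mul_eq_zero.mp hc').resolve_right (sinh_pos_iff.mpr one_pos).ne'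
  refine ⟨?_, hb, hc⟩
  subst hb hc
  linarith

end Minkowski

open Minkowski

/-- For the helicoidal surface with spacelike axis generated by a Lorentzian circle,
the numerator of the mean curvature equals
`hr²(-λ² + μ² + h² - rλ cosh(s+θ) + rμ sinh(s+θ))`; consequently the surface is never
minimal. -/
theorem stmt_17 (h r lam mu θ : ℝ) (hh : h ≠ 0) (hr : 0 < r) :
    let X : ℝ → ℝ → ℝ × ℝ × ℝ := fun s t =>
      (h * t,
        lam * Real.cosh t + mu * Real.sinh t + r * Real.cosh (s + t + θ),
        lam * Real.sinh t + mu * Real.cosh t + r * Real.sinh (s + t + θ))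
    (∀ s t : ℝ,
        H1 X s t = h * r ^ 2 * (-lam ^ 2 + mu ^ 2 + h ^ 2
          - r * lam * Real.cosh (s + θ) + r * mu * Real.sinh (s + θ))) ∧
      ¬(∀ s t : ℝ, H1 X s t = 0) := by
  intro X
  have hH1 : ∀ s t, H1 X s t = h * r ^ 2 * (-lam ^ 2 + mu ^ 2 + h ^ 2
      - r * lam * cosh (s + θ) + r * mu * sinh (s + θ)) := by
    rw [show X = _ from (helicoidalSurface_lorentzCircle lam mu r θ h).symm]
    exact H1_helicoidalSurface_lorentzCircle lam mu r θ h
  refine ⟨hH1, fun hminimal => ?_⟩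
  have hfactor : h * r ^ 2 ≠ 0 := by positivity
  obtain ⟨hconst, hrlam, hrmu⟩ := eq_zero_of_forall_add_mul_cosh_add_mul_sinh_eq_zero
    (a := -lam ^ 2 + mu ^ 2 + h ^ 2) (b := -(r * lam)) (c := r * mu) fun x => by
      have := (hH1 (x - θ) 0).symm.trans (hminimal (x - θ) 0)
      rw [sub_add_cancel, mul_eq_zero] at this
      linear_combination this.resolve_left hfactor
  have hlam : lam = 0 := by simpa [hr.ne'] using hrlam
  have hmu : mu = 0 := by simpa [hr.ne'] using hrmu
  subst hlam hmu
  exact hh (pow_eq_zero_iff two_ne_zero |>.mp (by linarith))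
end
end

section
/- Let h ≠ 0 and b ∈ ℝ. The parabolic null cylinder X(s,t) = (s + bt + h(t³/3 - t), b + ht², s + bt + h(t³/3 + t)) satisfies H₁ = 0 and K₁ = 0 identically, i.e. both its mean curvature and Gauss curvature vanish wherever the surface is non-degenerate. -/
noncomputable section

/-! `X(s,t) = s·v + c(t)` is a cylinder over the lightlike direction `v = (1,0,1)`. Hence
`X_s = v` is constant and `X_ss = X_st = 0`, which kills `K₁` and every term of `H₁` except
`E·det(X_s,X_t,X_tt)`, where `E = ⟨v,v⟩ = 0`. -/

lemma det3_zero_right (u v : ℝ × ℝ × ℝ) : det3 u v 0 = 0 := by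
  simp [det3]

section Cylinder

variable {X : ℝ → ℝ → ℝ × ℝ × ℝ} {v : ℝ × ℝ × ℝ}

lemma pd1_eq_of_eq_smul_add {c : ℝ → ℝ × ℝ × ℝ} (hX : ∀ s t, X s t = s • v + c t)
    (s t : ℝ) : pd1 X s t = v := by
  have hd : HasDerivAt (fun u => u • v + c t) ((1 : ℝ) • v) s :=
    ((hasDerivAt_id s).smul_const v).add_const (c t)
  simp only [pd1, hX, one_smul] at hd ⊢
  exact hd.deriv

lemma pd1_pd1_eq_zero_of_pd1_eq (hX : ∀ s t, pd1 X s t = v) (s t : ℝ) :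
    pd1 (pd1 X) s t = 0 := by
  simp only [pd1] at hX ⊢
  simp only [hX, deriv_const]

lemma pd2_pd1_eq_zero_of_pd1_eq (hX : ∀ s t, pd1 X s t = v) (s t : ℝ) :
    pd2 (pd1 X) s t = 0 := by
  simp only [pd2, hX, deriv_const]

lemma K1_eq_zero_of_pd1_eq (hX : ∀ s t, pd1 X s t = v) (s t : ℝ) : K1 X s t = 0 := by
  simp [K1, pd1_pd1_eq_zero_of_pd1_eq hX, pd2_pd1_eq_zero_of_pd1_eq hX, det3_zero_right]

lemma H1_eq_zero_of_pd1_eq (hX : ∀ s t, pd1 X s t = v) (hv : mink v v = 0) (s t : ℝ) :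
    H1 X s t = 0 := by
  simp [H1, Ecoef, hX, hv, pd1_pd1_eq_zero_of_pd1_eq hX, pd2_pd1_eq_zero_of_pd1_eq hX,
    det3_zero_right]

end Cylinder

theorem stmt_19_general (h b : ℝ) :
    let X : ℝ → ℝ → ℝ × ℝ × ℝ := fun s t =>
      (s + b * t + h * (t ^ 3 / 3 - t), b + h * t ^ 2,
        s + b * t + h * (t ^ 3 / 3 + t))
    ∀ s t : ℝ, H1 X s t = 0 ∧ K1 X s t = 0 := by
  intro X s t
  have hX : ∀ s t, pd1 X s t = (1, 0, 1) :=
    pd1_eq_of_eq_smul_add (c := fun t =>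
      (b * t + h * (t ^ 3 / 3 - t), b + h * t ^ 2, b * t + h * (t ^ 3 / 3 + t)))
      fun s t => by ext <;> simp [X] <;> ring
  exact ⟨H1_eq_zero_of_pd1_eq hX (by norm_num [mink]) s t, K1_eq_zero_of_pd1_eq hX s t⟩

/-- The parabolic null cylinder
`X(s,t) = (s + bt + h(t³/3 - t), b + ht², s + bt + h(t³/3 + t))` satisfies `H₁ = 0`
and `K₁ = 0` identically: both its mean curvature and its Gauss curvature vanish
wherever the surface is non-degenerate. -/
theorem stmt_19 (h b : ℝ) (hh : h ≠ 0) :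
    let X : ℝ → ℝ → ℝ × ℝ × ℝ := fun s t =>
      (s + b * t + h * (t ^ 3 / 3 - t), b + h * t ^ 2,
        s + b * t + h * (t ^ 3 / 3 + t))
    ∀ s t : ℝ, H1 X s t = 0 ∧ K1 X s t = 0 :=
  stmt_19_general h b
end
end
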